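/- Let p be a prime, R a commutative ring, M an R-module with pM = 0, T ⊆ R a multiplicative submonoid, and D: R → M an FW-derivation (where M is viewed as a T⁻¹R-module). Then the formula D'(a/t) = (t^p D(a) − a^p D(t))/t^{2p} gives a well-defined map D': T⁻¹R → M, and D' is the unique FW-derivation on T⁻¹R extending D. -/

import Mathlib

open scoped TensorProduct

/-- The polynomial `P(X,Y) = ((X+Y)^p - X^p - Y^p)/p` evaluated at `a, b`. -/
def fwP {R : Type*} [CommRing R] (p : ℕ) (a b : R) : R :=
  ∑ i ∈ Finset.Ioo 0 p, (Nat.choose p i / p : ℕ) • (a ^ i * b ^ (p - i))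

/-- A Frobenius–Witt derivation. -/
structure IsFWDerivation {R M : Type*} [CommRing R] [AddCommGroup M] [Module R M]
    (p : ℕ) (D : R → M) : Prop where
  map_add' : ∀ a b : R, D (a + b) = D a + D b - fwP p a b • D (p : R)
  map_mul' : ∀ a b : R, D (a * b) = b ^ p • D a + a ^ p • D b

/-- A logarithmic Frobenius–Witt derivation of the prelog ring `(R, Q, α)`. -/
structure IsLogFWDerivation {R M Q : Type*} [CommRing R] [AddCommGroup M] [Module R M]
    [CommMonoid Q] (p : ℕ) (α : Q →* R) (D : R → M) (δ : Q → M) : Prop where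
  toFW : IsFWDerivation p D
  map_one' : δ 1 = 0
  map_mul' : ∀ x y : Q, δ (x * y) = δ x + δ y
  compat : ∀ x : Q, D (α x) = α x ^ p • δ x

/-- The congruence on `Q` identifying elements differing by a unit;
its quotient is the sharpification `Q̄ = Q/Q^×`. -/
def sharpCon (Q : Type*) [CommMonoid Q] : Con Q where
  r x y := ∃ u : Qˣ, x = y * u
  iseqv := by
    refine ⟨fun x => ⟨1, by simp⟩, ?_, ?_⟩
    · rintro x y ⟨u, rfl⟩; exact ⟨u⁻¹, by simp⟩
    · rintro x y z ⟨u, rfl⟩ ⟨v, rfl⟩; exact ⟨v * u, by rw [Units.val_mul, mul_assoc]⟩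
  mul' := by
    rintro a b c d ⟨u, rfl⟩ ⟨v, rfl⟩
    exact ⟨u * v, by rw [Units.val_mul]; exact mul_mul_mul_comm b u d v⟩

/-- An ideal of a commutative monoid. -/
def IsMonIdeal {Q : Type*} [CommMonoid Q] (I : Set Q) : Prop :=
  ∀ a x : Q, x ∈ I → a * x ∈ I

/-- A prime ideal of a commutative monoid: an ideal whose complement is a submonoid. -/
def IsPrimeMonIdeal {Q : Type*} [CommMonoid Q] (I : Set Q) : Prop :=
  IsMonIdeal I ∧ (1 : Q) ∉ I ∧ ∀ x y : Q, x * y ∈ I → x ∈ I ∨ y ∈ I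

/-- The dimension of a commutative monoid: the Krull dimension of its poset of prime ideals. -/
noncomputable def monDim (Q : Type*) [CommMonoid Q] : WithBot (WithTop ℕ) :=
  Order.krullDim {I : Set Q // IsPrimeMonIdeal I}

/-- A commutative monoid is integral (cancellative). -/
def IsIntegralMon (Q : Type*) [CommMonoid Q] : Prop :=
  ∀ a b c : Q, a * b = a * c → b = c

/-- A commutative monoid is saturated: it is integral and whenever `x ∈ Q^{gp}` satisfies
`x^n ∈ Q` for some `n > 0`, then `x ∈ Q`; intrinsically, `a^n ∣ b^n → a ∣ b`. -/
def IsSaturatedMon (Q : Type*) [CommMonoid Q] : Prop :=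
  IsIntegralMon Q ∧ ∀ (a b : Q) (n : ℕ), 0 < n → a ^ n ∣ b ^ n → a ∣ b

/-- A commutative monoid is sharp if its only unit is `1`. -/
def IsSharpMon (Q : Type*) [CommMonoid Q] : Prop :=
  ∀ x : Q, IsUnit x → x = 1

/-- The ideal `I_α` of a prelog ring `(R, Q, α)`, generated by `α(Q⁺)`. -/
def prelogIdeal {R Q : Type*} [CommRing R] [CommMonoid Q] (α : Q →* R) : Ideal R :=
  Ideal.span (α '' {x : Q | ¬ IsUnit x})

/-- A Noetherian local ring is regular: its maximal ideal (= the ideal of nonunits) is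
generated by `dim R` elements. -/
def IsRegularLocal (S : Type*) [CommRing S] : Prop :=
  IsNoetherianRing S ∧ IsLocalRing S ∧
    ∃ (n : ℕ) (s : Fin n → S),
      Ideal.span (Set.range s) = Ideal.span {x : S | ¬ IsUnit x} ∧
      ringKrullDim S = (n : WithBot (WithTop ℕ))

/-- Log regularity of a local prelog ring `(R, Q, α)`. -/
def IsLogRegular {R Q : Type*} [CommRing R] [CommMonoid Q] (α : Q →* R) : Prop :=
  IsRegularLocal (R ⧸ prelogIdeal α) ∧
    ringKrullDim R = @HAdd.hAdd (WithBot ℕ∞) (WithBot ℕ∞) (WithBot ℕ∞) _ (ringKrullDim (R ⧸ prelogIdeal α)) (monDim Q)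

/-! Write `x = a/t`. Applying the product rule to `a = x · t` gives
`t^p D'(x) = D(a) - x^p D(t)`, and `t` acts invertibly on `M`, so this quotient rule is forced.
Conversely, after multiplying by a power of the denominators, each property needed of the quotient
rule (independence of the representative, the product rule, the sum rule) becomes an identity among
values of `D` on `R`. For the sum rule, write both fractions over a common denominator `t`; the term
`p P(x,y) D(t)` coming from `(x + y)^p = x^p + y^p + p P(x,y)` vanishes because `pM = 0`, and
`t^p P(a/t, b/t) = P(a, b)` by homogeneity of `P`. -/

section fwP

variable {R : Type*} [CommRing R] {p : ℕ}

theorem add_pow_eq_add_add_mul_fwP (hp : p.Prime) (a b : R) :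
    (a + b) ^ p = a ^ p + b ^ p + p * fwP p a b := by
  have hmul : (p : R) * fwP p a b
      = ∑ i ∈ Finset.Ioo 0 p, a ^ i * b ^ (p - i) * (p.choose i : R) := by
    rw [fwP, Finset.mul_sum]
    refine Finset.sum_congr rfl fun i hi => ?_
    rw [Finset.mem_Ioo] at hi
    rw [nsmul_eq_mul, ← mul_assoc, ← Nat.cast_mul,
      Nat.mul_div_cancel' (hp.dvd_choose_self hi.1.ne' hi.2), mul_comm]
  have hrange : Finset.range (p + 1) = insert 0 (insert p (Finset.Ioo 0 p)) := by
    ext i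
    simp only [Finset.mem_range, Finset.mem_insert, Finset.mem_Ioo]
    omega
  have h0 : 0 ∉ insert p (Finset.Ioo 0 p) := by simp [hp.ne_zero.symm]
  rw [add_pow, hrange, Finset.sum_insert h0, Finset.sum_insert (by simp), hmul]
  simp only [pow_zero, Nat.sub_self, Nat.sub_zero, Nat.choose_self, Nat.choose_zero_right,
    Nat.cast_one, one_mul, mul_one]
  ring

theorem fwP_mul_mul (a b c : R) : fwP p (a * c) (b * c) = c ^ p * fwP p a b := by
  rw [fwP, fwP, Finset.mul_sum]
  refine Finset.sum_congr rfl fun i hi => ?_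
  have hc : c ^ i * c ^ (p - i) = c ^ p := by
    rw [← pow_add, Nat.add_sub_cancel' (Finset.mem_Ioo.mp hi).2.le]
  rw [mul_pow, mul_pow, mul_smul_comm, ← hc]
  congr 1
  ring

theorem map_fwP {S : Type*} [CommRing S] (f : R →+* S) (a b : R) :
    f (fwP p a b) = fwP p (f a) (f b) := by
  simp only [fwP, map_sum, map_nsmul, map_mul, map_pow]

end fwP

theorem IsFWDerivation.map_one {p : ℕ} {R M : Type*} [CommRing R] [AddCommGroup M] [Module R M]
    {D : R → M} (hD : IsFWDerivation p D) : D 1 = 0 := by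
  simpa using hD.map_mul' 1 1

namespace IsLocalization

variable {R S : Type*} [CommRing R] [CommRing S] [Algebra R S] {T : Submonoid R}
  [IsLocalization T S]

theorem mk'_add_of_same_den (a b : R) (t : T) : mk' S (a + b) t = mk' S a t + mk' S b t := by
  rw [mk'_eq_mul_mk'_one, mk'_eq_mul_mk'_one a, mk'_eq_mul_mk'_one b, map_add, add_mul]

variable (T) in
theorem exists_eq_mk'_and_eq_mk' (x y : S) :
    ∃ (a b : R) (t : T), x = mk' S a t ∧ y = mk' S b t := by
  obtain ⟨⟨a, t⟩, rfl⟩ := mk'_surjective T x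
  obtain ⟨⟨b, s⟩, rfl⟩ := mk'_surjective T y
  exact ⟨a * s, b * t, t * s, (mk'_cancel a t s).symm, by rw [mul_comm t s, mk'_cancel]⟩

variable (S) in
theorem mk'_pow_mul_algebraMap_pow (a : R) (t : T) (n : ℕ) :
    mk' S a t ^ n * algebraMap R S t ^ n = algebraMap R S a ^ n := by
  rw [← mul_pow, mk'_spec]

variable (S) in
theorem smul_left_cancel_of_mem {M : Type*} [AddCommGroup M] [Module S M] [Module R M]
    [IsScalarTower R S M] {r : R} (hr : r ∈ T) {m n : M} (h : r • m = r • n) : m = n := by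
  rw [← algebraMap_smul S r m, ← algebraMap_smul S r n] at h
  exact ((map_units S ⟨r, hr⟩).smul_left_cancel).mp h

end IsLocalization

section Extension

open IsLocalization

variable {R : Type*} [CommRing R] {T : Submonoid R} {S M : Type*} [CommRing S] [Algebra R S]
  [IsLocalization T S] [AddCommGroup M] [Module S M] [Module R M] [IsScalarTower R S M]

variable (S) in
noncomputable def fwQuotientRule (p : ℕ) (D : R → M) (a : R) (t : T) : M :=
  mk' S 1 ⟨(t : R) ^ (2 * p), pow_mem t.2 (2 * p)⟩ •
    ((t : R) ^ p • D a - a ^ p • D (t : R))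

variable {p : ℕ} {D : R → M}

variable (S p D) in
theorem pow_smul_fwQuotientRule (a : R) (t : T) :
    (t : R) ^ p • fwQuotientRule S p D a t = D a - mk' S a t ^ p • D t := by
  set u := mk' S (1 : R) ⟨(t : R) ^ (2 * p), pow_mem t.2 (2 * p)⟩
  have hu : u * algebraMap R S t ^ (2 * p) = 1 := by
    rw [← map_pow, ← map_one (algebraMap R S)]
    exact mk'_spec S 1 _
  have hx := mk'_pow_mul_algebraMap_pow S a t p
  simp only [fwQuotientRule, ← algebraMap_smul S (_ ^ _ : R), map_pow]
  linear_combination (norm := module)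
    hu • D a + (u * algebraMap R S t ^ p) • hx • D t - mk' S a t ^ p • hu • D t

theorem fwQuotientRule_cancel (hD : IsFWDerivation p D) (a : R) (t u : T) :
    fwQuotientRule S p D (a * u) (t * u) = fwQuotientRule S p D a t := by
  apply smul_left_cancel_of_mem S (pow_mem (t * u).2 p)
  have hF := pow_smul_fwQuotientRule S p D a t
  have hx := mk'_pow_mul_algebraMap_pow S a t p
  rw [pow_smul_fwQuotientRule, mk'_cancel, Submonoid.coe_mul, hD.map_mul', hD.map_mul']
  simp only [← algebraMap_smul S (_ : R), map_pow, map_mul] at hF ⊢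
  linear_combination (norm := module) -(algebraMap R S u ^ p • hF) - hx • D u

theorem fwQuotientRule_eq_of_mk'_eq (hD : IsFWDerivation p D) {a b : R} {t s : T}
    (h : mk' S a t = mk' S b s) : fwQuotientRule S p D a t = fwQuotientRule S p D b s := by
  obtain ⟨c, hc⟩ := (eq_iff_exists T S).mp (mk'_eq_iff_eq.mp h)
  calc fwQuotientRule S p D a t = fwQuotientRule S p D (a * (s * c)) (t * (s * c)) :=
        (fwQuotientRule_cancel hD a t _).symm
    _ = fwQuotientRule S p D (b * (t * c)) (s * (t * c)) := by
        congr 1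
        · linear_combination hc
        · rw [mul_left_comm]
    _ = fwQuotientRule S p D b s := fwQuotientRule_cancel hD b s _

theorem fwQuotientRule_one (hD : IsFWDerivation p D) (a : R) :
    fwQuotientRule S p D a (1 : T) = D a := by
  simpa [hD.map_one] using pow_smul_fwQuotientRule S p D a (1 : T)

theorem fwQuotientRule_mul (hD : IsFWDerivation p D) (a b : R) (t s : T) :
    fwQuotientRule S p D (a * b) (t * s) =
      mk' S b s ^ p • fwQuotientRule S p D a t + mk' S a t ^ p • fwQuotientRule S p D b s := by
  apply smul_left_cancel_of_mem S (pow_mem (t * s).2 p)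
  have hFa := pow_smul_fwQuotientRule S p D a t
  have hFb := pow_smul_fwQuotientRule S p D b s
  have hx := mk'_pow_mul_algebraMap_pow S a t p
  have hy := mk'_pow_mul_algebraMap_pow S b s p
  rw [pow_smul_fwQuotientRule, mk'_mul, Submonoid.coe_mul, hD.map_mul', hD.map_mul']
  simp only [← algebraMap_smul S (_ : R), map_pow, map_mul] at hFa hFb ⊢
  linear_combination (norm := module) -(algebraMap R S s ^ p * mk' S b s ^ p) • hFa
    - (algebraMap R S t ^ p * mk' S a t ^ p) • hFb - hy • D a - hx • D b

theorem fwQuotientRule_add (hp : p.Prime) (hpM : ∀ m : M, p • m = 0) (hD : IsFWDerivation p D)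
    (a b : R) (t : T) :
    fwQuotientRule S p D (a + b) t = fwQuotientRule S p D a t + fwQuotientRule S p D b t
      - fwP p (mk' S a t) (mk' S b t) • D (p : R) := by
  apply smul_left_cancel_of_mem S (pow_mem t.2 p)
  have hFa := pow_smul_fwQuotientRule S p D a t
  have hFb := pow_smul_fwQuotientRule S p D b t
  have hP : algebraMap R S t ^ p * fwP p (mk' S a t) (mk' S b t) = algebraMap R S (fwP p a b) := by
    rw [← fwP_mul_mul, mk'_spec, mk'_spec, map_fwP]
  have hpTorsion : ((p : S) * fwP p (mk' S a t) (mk' S b t)) • D t = 0 := by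
    rw [mul_comm, mul_smul, Nat.cast_smul_eq_nsmul, hpM, smul_zero]
  rw [pow_smul_fwQuotientRule, mk'_add_of_same_den, add_pow_eq_add_add_mul_fwP hp, hD.map_add']
  simp only [← algebraMap_smul S (_ : R), map_pow] at hFa hFb ⊢
  linear_combination (norm := module) -hFa - hFb + hP • D (p : R) - hpTorsion

variable (T S) in
noncomputable def fwLocalizationExtension (p : ℕ) (D : R → M) (x : S) : M :=
  fwQuotientRule S p D (sec T x).1 (sec T x).2

theorem fwLocalizationExtension_mk' (hD : IsFWDerivation p D) (a : R) (t : T) :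
    fwLocalizationExtension T S p D (mk' S a t) = fwQuotientRule S p D a t :=
  fwQuotientRule_eq_of_mk'_eq hD (by rw [mk'_sec])

theorem fwLocalizationExtension_algebraMap (hD : IsFWDerivation p D) (a : R) :
    fwLocalizationExtension T S p D (algebraMap R S a) = D a := by
  rw [← mk'_one (M := T), fwLocalizationExtension_mk' hD, fwQuotientRule_one hD]

theorem isFWDerivation_fwLocalizationExtension (hp : p.Prime) (hpM : ∀ m : M, p • m = 0)
    (hD : IsFWDerivation p D) : IsFWDerivation p (fwLocalizationExtension T S p D) where
  map_add' x y := by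
    obtain ⟨a, b, t, rfl, rfl⟩ := exists_eq_mk'_and_eq_mk' T x y
    rw [← mk'_add_of_same_den, ← map_natCast (algebraMap R S),
      fwLocalizationExtension_algebraMap hD]
    simp only [fwLocalizationExtension_mk' hD]
    exact fwQuotientRule_add hp hpM hD a b t
  map_mul' x y := by
    obtain ⟨⟨a, t⟩, rfl⟩ := mk'_surjective T x
    obtain ⟨⟨b, s⟩, rfl⟩ := mk'_surjective T y
    simp only [← mk'_mul, fwLocalizationExtension_mk' hD]
    exact fwQuotientRule_mul hD a b t s

theorem eq_fwLocalizationExtension (hD : IsFWDerivation p D) {D' : S → M}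
    (hD' : IsFWDerivation p D') (hext : ∀ a : R, D' (algebraMap R S a) = D a) :
    D' = fwLocalizationExtension T S p D := by
  funext x
  obtain ⟨⟨a, t⟩, rfl⟩ := mk'_surjective T x
  apply smul_left_cancel_of_mem S (pow_mem t.2 p)
  rw [fwLocalizationExtension_mk' hD, pow_smul_fwQuotientRule, ← hext, ← hext,
    ← mk'_spec S a t, hD'.map_mul', ← algebraMap_smul S, map_pow, add_sub_cancel_right]

end Extension

/-- an FW-derivation into a `p`-torsion module extends uniquely to the
localization `T⁻¹R`, via `D'(a/t) = (t^p D(a) − a^p D(t))/t^{2p}`. -/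
theorem stmt4 (p : ℕ) (hp : p.Prime) {R : Type*} [CommRing R] (T : Submonoid R)
    {M : Type*} [AddCommGroup M] [Module (Localization T) M] [Module R M]
    [IsScalarTower R (Localization T) M]
    (hpM : ∀ m : M, p • m = 0)
    (D : R → M) (hD : IsFWDerivation p D) :
    ∃! D' : Localization T → M, IsFWDerivation p D' ∧
      (∀ a : R, D' (algebraMap R (Localization T) a) = D a) ∧
      ∀ (a : R) (t : T),
        D' (Localization.mk a t) =
          Localization.mk 1 ⟨(t : R) ^ (2 * p), pow_mem t.2 (2 * p)⟩ •
            ((t : R) ^ p • D a - a ^ p • D (t : R)) := by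
  refine ⟨fwLocalizationExtension T (Localization T) p D,
    ⟨isFWDerivation_fwLocalizationExtension hp hpM hD, fwLocalizationExtension_algebraMap hD,
      fun a t => ?_⟩, fun D' ⟨hD', hext, _⟩ => eq_fwLocalizationExtension hD hD' hext⟩
  rw [Localization.mk_eq_mk', fwLocalizationExtension_mk' hD, fwQuotientRule]
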